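/- Every eigenfunction of the flat Klein bottle K_1 with eigenvalue 4, i.e. every nonzero function of the form u(x,y) = A cos(2x) + B sin(2x) + C cos(2y), has at most 4 nodal domains on K_1; since 4 = λ₅(K_1), the eigenvalue 4 is not Courant-sharp. -/

import Mathlib

open Real

/-- The identification relation on `ℝ²` defining the flat Klein bottle `K_1`
(`a = b = 2π`): `(x,y) ↦ (x + kπ, (−1)^k y + 2πl)`, `k, l ∈ ℤ`. -/
def kleinRel (p q : ℝ × ℝ) : Prop :=
  ∃ k l : ℤ, q.1 = p.1 + k * π ∧ q.2 = (-1 : ℝ) ^ k * p.2 + 2 * π * l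

/-- The flat Klein bottle `K_1` as a quotient topological space. -/
def KleinBottle : Type := Quot kleinRel

instance : TopologicalSpace KleinBottle :=
  (instTopologicalSpaceQuot : TopologicalSpace (Quot kleinRel))

/-!
Write `u = a cos 2(x - α) + b cos 2(y - β)` and `-u = a' cos 2(x - α') + b' cos 2(y - β')` with
nonnegative amplitudes. Since `cos 2t` decreases in `|t|` on `|t| ≤ π/2`, the part of `{u > 0}`
inside the closed square of half-side `π/2` centred at `(α, β)` (a closed ball for the sup metric
of `ℝ × ℝ`), and likewise at `(α, β + π)`, is star-shaped about the centre. These two squares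
contain a representative of every point of `K_1`, so `{u > 0}` is covered by the images of two
connected sets; the same holds for `{u < 0}`, which leaves room for at most four nodal domains.
-/

open Set Metric

theorem natCard_connectedComponents_le_of_isPreconnected_cover {X ι : Type*}
    [TopologicalSpace X] [Finite ι] {T : Set X} (S : ι → Set X)
    (hS : ∀ i, IsPreconnected (S i)) (hST : ∀ i, S i ⊆ T) (hTS : T ⊆ ⋃ i, S i) :
    Nat.card (ConnectedComponents T) ≤ Nat.card ι := by
  have hpre : ∀ i, IsPreconnected (Subtype.val ⁻¹' S i : Set T) := fun i => by
    rw [← Topology.IsInducing.subtypeVal.isPreconnected_image, Subtype.image_preimage_coe,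
      inter_eq_self_of_subset_right (hST i)]
    exact hS i
  choose idx hidx using fun x : T => mem_iUnion.mp (hTS x.2)
  let rep := Function.surjInv (ConnectedComponents.surjective_coe (α := T))
  refine Nat.card_le_card_of_injective (fun c => idx (rep c)) fun c d hcd => ?_
  have hd : rep d ∈ Subtype.val ⁻¹' S (idx (rep c)) := by
    simpa only [mem_preimage, hcd] using hidx (rep d)
  rw [← Function.surjInv_eq ConnectedComponents.surjective_coe c,
    ← Function.surjInv_eq ConnectedComponents.surjective_coe d, ConnectedComponents.coe_eq_coe]
  exact connectedComponent_eq ((hpre _).subset_connectedComponent (hidx (rep c)) hd)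

theorem StarConvex.isPreconnected {E : Type*} [AddCommGroup E] [Module ℝ E] [TopologicalSpace E]
    [IsTopologicalAddGroup E] [ContinuousSMul ℝ E] {s : Set E} {a : E} (h : StarConvex ℝ a s) :
    IsPreconnected s := by
  rcases s.eq_empty_or_nonempty with rfl | hs
  · exact isPreconnected_empty
  · exact (h.isPathConnected (h.mem hs)).isConnected.isPreconnected

theorem Real.cos_le_cos_mul {θ t : ℝ} (hθ : |θ| ≤ π) (ht₀ : 0 ≤ t) (ht₁ : t ≤ 1) :
    cos θ ≤ cos (t * θ) := by
  rw [← cos_abs θ, ← cos_abs (t * θ)]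
  refine cos_le_cos_of_nonneg_of_le_pi (abs_nonneg _) hθ ?_
  rw [abs_mul, abs_of_nonneg ht₀]
  exact mul_le_of_le_one_left (abs_nonneg θ) ht₁

theorem starConvex_closedBall_inter_cos_sum_pos {f : ℝ × ℝ → ℝ} {a b α β : ℝ}
    (ha : 0 ≤ a) (hb : 0 ≤ b)
    (hf : ∀ p, f p = a * cos (2 * (p.1 - α)) + b * cos (2 * (p.2 - β))) :
    StarConvex ℝ (α, β) (closedBall (α, β) (π / 2) ∩ {p | 0 < f p}) := by
  rintro p ⟨hpc, hfp⟩ s t hs ht hst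
  refine ⟨(convex_closedBall _ _).starConvex (mem_closedBall_self (by positivity)) hpc hs ht hst,
    ?_⟩
  rw [mem_closedBall, Prod.dist_eq, max_le_iff, Real.dist_eq, Real.dist_eq] at hpc
  have hs' : s = 1 - t := by linarith
  have h₁ : 2 * ((s • (α, β) + t • p).1 - α) = t * (2 * (p.1 - α)) := by
    simp only [Prod.fst_add, Prod.smul_fst, smul_eq_mul, hs']; ring
  have h₂ : 2 * ((s • (α, β) + t • p).2 - β) = t * (2 * (p.2 - β)) := by
    simp only [Prod.snd_add, Prod.smul_snd, smul_eq_mul, hs']; ring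
  have hcos : ∀ z : ℝ, |z| ≤ π / 2 → cos (2 * z) ≤ cos (t * (2 * z)) := fun z hz =>
    cos_le_cos_mul (by rw [abs_mul, abs_two]; linarith) ht (by linarith)
  rw [mem_ofPred_eq, hf] at hfp ⊢
  rw [h₁, h₂]
  nlinarith [mul_le_mul_of_nonneg_left (hcos _ hpc.1) ha,
    mul_le_mul_of_nonneg_left (hcos _ hpc.2) hb]

theorem exists_kleinRel_mem_closedBall (p : ℝ × ℝ) (α β : ℝ) :
    ∃ q, kleinRel p q ∧ (q ∈ closedBall (α, β) (π / 2) ∨ q ∈ closedBall (α, β + π) (π / 2)) := by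
  obtain ⟨k, ⟨hk₁, hk₂⟩, -⟩ := existsUnique_add_zsmul_mem_Ico pi_pos p.1 (α - π / 2)
  obtain ⟨l, ⟨hl₁, hl₂⟩, -⟩ :=
    existsUnique_add_zsmul_mem_Ico two_pi_pos ((-1 : ℝ) ^ k * p.2) (β - π / 2)
  rw [zsmul_eq_mul] at hk₁ hk₂ hl₁ hl₂
  refine ⟨(p.1 + k * π, (-1 : ℝ) ^ k * p.2 + 2 * π * l), ⟨k, l, rfl, rfl⟩, ?_⟩
  simp only [mem_closedBall, Prod.dist_eq, max_le_iff, Real.dist_eq, abs_le]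
  by_cases hl : (-1 : ℝ) ^ k * p.2 + l * (2 * π) ≤ β + π / 2
  · exact Or.inl ⟨⟨by linarith, by linarith⟩, by linarith, by linarith⟩
  · exact Or.inr ⟨⟨by linarith, by linarith⟩, by linarith, by linarith⟩

noncomputable def kleinEigenfun (A B C : ℝ) (p : ℝ × ℝ) : ℝ :=
  A * cos (2 * p.1) + B * sin (2 * p.1) + C * cos (2 * p.2)

theorem kleinEigenfun_neg (A B C : ℝ) (p : ℝ × ℝ) :
    kleinEigenfun (-A) (-B) (-C) p = -kleinEigenfun A B C p := by
  simp only [kleinEigenfun]; ring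

theorem kleinEigenfun_eq_of_kleinRel (A B C : ℝ) {p q : ℝ × ℝ} (h : kleinRel p q) :
    kleinEigenfun A B C q = kleinEigenfun A B C p := by
  obtain ⟨k, l, hq₁, hq₂⟩ := h
  have hx : 2 * q.1 = 2 * p.1 + k * (2 * π) := by rw [hq₁]; ring
  have hy : cos (2 * q.2) = cos (2 * p.2) := by
    have : 2 * q.2 = 2 * ((-1 : ℝ) ^ k * p.2) + ((2 * l : ℤ) : ℝ) * (2 * π) := by
      rw [hq₂]; push_cast; ring
    rw [this, cos_add_int_mul_two_pi]
    rcases Int.even_or_odd k with hk | hk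
    · rw [hk.neg_one_zpow, one_mul]
    · rw [hk.neg_one_zpow, neg_one_mul, mul_neg, cos_neg]
  simp only [kleinEigenfun, hx, hy, cos_add_int_mul_two_pi, sin_add_int_mul_two_pi]

theorem exists_cos_sin_eq_mul_cos (A B : ℝ) :
    ∃ a α : ℝ, 0 ≤ a ∧ ∀ x, A * cos (2 * x) + B * sin (2 * x) = a * cos (2 * (x - α)) := by
  refine ⟨‖(⟨A, B⟩ : ℂ)‖, Complex.arg ⟨A, B⟩ / 2, norm_nonneg _, fun x => ?_⟩
  have hA := Complex.norm_mul_cos_arg ⟨A, B⟩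
  have hB := Complex.norm_mul_sin_arg ⟨A, B⟩
  rw [show 2 * (x - Complex.arg ⟨A, B⟩ / 2) = 2 * x - Complex.arg ⟨A, B⟩ by ring, cos_sub]
  linear_combination (-cos (2 * x)) * hA - sin (2 * x) * hB

theorem exists_mul_cos_eq_mul_cos (C : ℝ) :
    ∃ b β : ℝ, 0 ≤ b ∧ ∀ y, C * cos (2 * y) = b * cos (2 * (y - β)) := by
  rcases le_or_gt 0 C with hC | hC
  · exact ⟨C, 0, hC, fun y => by rw [sub_zero]⟩
  · refine ⟨-C, π / 2, by linarith, fun y => ?_⟩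
    rw [show 2 * (y - π / 2) = 2 * y - π by ring, cos_sub_pi]
    ring

theorem exists_kleinEigenfun_eq_cos_sum (A B C : ℝ) :
    ∃ a b α β : ℝ, 0 ≤ a ∧ 0 ≤ b ∧
      ∀ p, kleinEigenfun A B C p = a * cos (2 * (p.1 - α)) + b * cos (2 * (p.2 - β)) := by
  obtain ⟨a, α, ha, hx⟩ := exists_cos_sin_eq_mul_cos A B
  obtain ⟨b, β, hb, hy⟩ := exists_mul_cos_eq_mul_cos C
  exact ⟨a, b, α, β, ha, hb, fun p => by rw [kleinEigenfun, hx, hy]⟩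

theorem exists_isPreconnected_cover_kleinEigenfun_pos (A B C : ℝ) :
    ∃ S : Bool → Set (Quot kleinRel), (∀ i, IsPreconnected (S i)) ∧
      (∀ i, S i ⊆ Quot.mk kleinRel '' {p | 0 < kleinEigenfun A B C p}) ∧
      Quot.mk kleinRel '' {p | 0 < kleinEigenfun A B C p} ⊆ ⋃ i, S i := by
  obtain ⟨a, b, α, β, ha, hb, hu⟩ := exists_kleinEigenfun_eq_cos_sum A B C
  have hu' : ∀ (i : Bool) p, kleinEigenfun A B C p =
      a * cos (2 * (p.1 - α)) + b * cos (2 * (p.2 - (β + bif i then π else 0))) := by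
    rintro (_ | _) p
    · simp only [hu, cond_false, add_zero]
    · rw [hu, cond_true, show 2 * (p.2 - (β + π)) = 2 * (p.2 - β) - 2 * π by ring, cos_sub_two_pi]
  refine ⟨fun i => Quot.mk _ '' (closedBall (α, β + bif i then π else 0) (π / 2) ∩
      {p | 0 < kleinEigenfun A B C p}), fun i => ?_, fun i => image_mono inter_subset_right, ?_⟩
  · exact (starConvex_closedBall_inter_cos_sum_pos ha hb (hu' i)).isPreconnected.image _
      continuous_quot_mk.continuousOn
  · rintro _ ⟨p, hp, rfl⟩
    obtain ⟨q, hpq, hq⟩ := exists_kleinRel_mem_closedBall p α β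
    have hq₀ : 0 < kleinEigenfun A B C q := (kleinEigenfun_eq_of_kleinRel A B C hpq).symm ▸ hp
    rw [Quot.sound hpq, mem_iUnion]
    rcases hq with hq | hq
    · exact ⟨false, q, ⟨by simpa only [cond_false, add_zero] using hq, hq₀⟩, rfl⟩
    · exact ⟨true, q, ⟨hq, hq₀⟩, rfl⟩

theorem lambda5_at_most_four_nodal_domains_general (A B C : ℝ) :
    Nat.card (ConnectedComponents
        ↥(Quot.mk kleinRel ''
          {p : ℝ × ℝ |
            A * Real.cos (2 * p.1) + B * Real.sin (2 * p.1) + C * Real.cos (2 * p.2) ≠ 0}))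
      ≤ 4 := by
  obtain ⟨S, hS, hSsub, hSpos⟩ := exists_isPreconnected_cover_kleinEigenfun_pos A B C
  obtain ⟨S', hS', hS'sub, hS'neg⟩ := exists_isPreconnected_cover_kleinEigenfun_pos (-A) (-B) (-C)
  have hsplit : {p : ℝ × ℝ | A * cos (2 * p.1) + B * sin (2 * p.1) + C * cos (2 * p.2) ≠ 0} =
      {p | 0 < kleinEigenfun A B C p} ∪ {p | 0 < kleinEigenfun (-A) (-B) (-C) p} := by
    ext p
    change _ ≠ 0 ↔ 0 < kleinEigenfun A B C p ∨ 0 < kleinEigenfun (-A) (-B) (-C) p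
    rw [kleinEigenfun_neg, neg_pos, or_comm]
    exact ne_iff_lt_or_gt
  rw [hsplit, image_union]
  calc _ ≤ Nat.card (Bool ⊕ Bool) :=
        natCard_connectedComponents_le_of_isPreconnected_cover (Sum.elim S S')
          (Sum.forall.2 ⟨hS, hS'⟩)
          (Sum.forall.2 ⟨fun i => (hSsub i).trans subset_union_left,
            fun i => (hS'sub i).trans subset_union_right⟩)
          (by rw [iUnion_sum]; exact union_subset_union hSpos hS'neg)
    _ = 4 := by simp

/-- every nonzero eigenfunction
`u(x,y) = A cos(2x) + B sin(2x) + C cos(2y)` of `K_1` with eigenvalue `4` has at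
most `4` nodal domains on `K_1`; since `4 = λ₅(K_1)`, this eigenvalue is not
Courant-sharp. -/
theorem lambda5_at_most_four_nodal_domains (A B C : ℝ) (h : ¬ (A = 0 ∧ B = 0 ∧ C = 0)) :
    Nat.card (ConnectedComponents
        ↥(Quot.mk kleinRel ''
          {p : ℝ × ℝ |
            A * Real.cos (2 * p.1) + B * Real.sin (2 * p.1) + C * Real.cos (2 * p.2) ≠ 0}))
      ≤ 4 :=
  lambda5_at_most_four_nodal_domains_general A B C
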